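/- Every tensor X ∈ ℝ^{I1×I2×I3} admits a T-SVD: there exist t-orthogonal tensors U ∈ ℝ^{I1×I1×I3} and V ∈ ℝ^{I2×I2×I3} and an f-diagonal tensor S ∈ ℝ^{I1×I2×I3} (each frontal slice of the mode-3 DFT of S is diagonal) such that X = U * S * V^T. -/

import Mathlib

open scoped BigOperators

namespace TTT

/-- Circular convolution of two length-`T` vectors. -/
def cconv {T : ℕ} (x y : Fin T → ℝ) : Fin T → ℝ := fun k => ∑ m, x m * y (k - m)

/-- The t-product, defined tube-wise via circular convolution. -/
def tprod {I1 I2 I4 T : ℕ} (X : Fin I1 → Fin I2 → Fin T → ℝ)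
    (Y : Fin I2 → Fin I4 → Fin T → ℝ) : Fin I1 → Fin I4 → Fin T → ℝ :=
  fun i k => ∑ j, cconv (X i j) (Y j k)

/-- t-product transpose. -/
def ttrans {I1 I2 T : ℕ} (X : Fin I1 → Fin I2 → Fin T → ℝ) :
    Fin I2 → Fin I1 → Fin T → ℝ :=
  fun j i t => X i j (-t)

/-- The identity tensor. -/
def tId {n T : ℕ} : Fin n → Fin n → Fin T → ℝ :=
  fun i j t => if i = j ∧ (t : ℕ) = 0 then 1 else 0

/-- A tensor is t-orthogonal if `Qᵀ*Q = Q*Qᵀ = I`. -/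
def tOrthogonal {n T : ℕ} (Q : Fin n → Fin n → Fin T → ℝ) : Prop :=
  tprod (ttrans Q) Q = tId ∧ tprod Q (ttrans Q) = tId

/-- Unnormalized discrete Fourier transform of a length-`T` real vector. -/
noncomputable def dftR {T : ℕ} (x : Fin T → ℝ) (k : Fin T) : ℂ :=
  ∑ m, (x m : ℂ) * Complex.exp (-2 * (Real.pi : ℂ) * Complex.I * ((k : ℕ) : ℂ) * ((m : ℕ) : ℂ) / ((T : ℕ) : ℂ))

/-- A tensor is f-diagonal if every frontal slice of its mode-3 DFT is diagonal. -/
def fDiagonal {I1 I2 T : ℕ} (S : Fin I1 → Fin I2 → Fin T → ℝ) : Prop :=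
  ∀ (t : Fin T) (i : Fin I1) (j : Fin I2), (i : ℕ) ≠ (j : ℕ) → dftR (S i j) t = 0

/-! The mode-3 DFT turns the t-product into the slice-wise matrix product, the t-transpose into
the slice-wise conjugate transpose and the identity tensor into identity slices, and it is injective
on real tensors. So it suffices to take SVDs `X̂ₖ = Ûₖ Ŝₖ V̂ₖᴴ` of the Fourier slices of `X` and
transform back. The slices of a real tensor satisfy `X̂₋ₖ = conj X̂ₖ`; choosing the SVDs with the
same symmetry (a real SVD on a self-conjugate slice, the conjugate of the SVD at `-k` elsewhere)
makes `Û, Ŝ, V̂` the transforms of real tensors.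

The matrix SVD comes from an orthonormal eigenbasis `e` of `AᴴA` sorted by decreasing eigenvalue:
the vectors `A eⱼ` are orthogonal, those that are nonzero form an initial segment and hence number
at most `m`, and Gram–Schmidt normalises and extends them to an orthonormal basis. -/

section SVD
open Module InnerProductSpace
open scoped InnerProductSpace

variable {𝕜 : Type*} [RCLike 𝕜] {E F : Type*} [NormedAddCommGroup E] [InnerProductSpace 𝕜 E]
  [FiniteDimensional 𝕜 E] [NormedAddCommGroup F] [InnerProductSpace 𝕜 F]
  [FiniteDimensional 𝕜 F] (A : E →ₗ[𝕜] F) {n : ℕ}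

theorem inner_apply_eigenvectorBasis_adjoint_comp_self (hn : finrank 𝕜 E = n) (i j : Fin n) :
    ⟪A (A.isSymmetric_adjoint_comp_self.eigenvectorBasis hn i),
        A (A.isSymmetric_adjoint_comp_self.eigenvectorBasis hn j)⟫_𝕜 =
      if i = j then (A.isSymmetric_adjoint_comp_self.eigenvalues hn j : 𝕜) else 0 := by
  rw [← LinearMap.adjoint_inner_right, ← LinearMap.comp_apply,
    LinearMap.IsSymmetric.apply_eigenvectorBasis, inner_smul_right,
    orthonormal_iff_ite.mp (OrthonormalBasis.orthonormal _) i j, mul_ite, mul_one, mul_zero]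

theorem norm_sq_apply_eigenvectorBasis_adjoint_comp_self (hn : finrank 𝕜 E = n) (j : Fin n) :
    ‖A (A.isSymmetric_adjoint_comp_self.eigenvectorBasis hn j)‖ ^ 2 =
      A.isSymmetric_adjoint_comp_self.eigenvalues hn j := by
  have h := inner_apply_eigenvectorBasis_adjoint_comp_self A hn j j
  rw [if_pos rfl, inner_self_eq_norm_sq_to_K] at h
  exact_mod_cast h

theorem apply_eigenvectorBasis_adjoint_comp_self_eq_zero (hn : finrank 𝕜 E = n) {m : ℕ}
    (hm : finrank 𝕜 F = m) {j : Fin n} (hj : m ≤ j) :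
    A (A.isSymmetric_adjoint_comp_self.eigenvectorBasis hn j) = 0 := by
  set e := A.isSymmetric_adjoint_comp_self.eigenvectorBasis hn
  have hnorm := norm_sq_apply_eigenvectorBasis_adjoint_comp_self A hn
  by_contra hAj
  have hpos : ∀ i : Fin (j + 1), A (e (Fin.castLE j.isLt i)) ≠ 0 := by
    intro i hi
    have hdj : 0 < A.isSymmetric_adjoint_comp_self.eigenvalues hn j := by
      rw [← hnorm]
      exact pow_pos (norm_pos_iff.mpr hAj) 2
    have hji := A.isSymmetric_adjoint_comp_self.eigenvalues_antitone hn
      (show Fin.castLE j.isLt i ≤ j from Fin.le_iff_val_le_val.mpr (Nat.le_of_lt_succ i.isLt))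
    have := hnorm (Fin.castLE j.isLt i)
    rw [hi, norm_zero] at this
    linarith
  have hind : LinearIndependent 𝕜 fun i : Fin (j + 1) => A (e (Fin.castLE j.isLt i)) := by
    refine linearIndependent_of_ne_zero_of_inner_eq_zero hpos fun i i' hii' => ?_
    dsimp only [e]
    rw [inner_apply_eigenvectorBasis_adjoint_comp_self A hn,
      if_neg ((Fin.castLE_injective _).ne hii')]
  have := hind.fintype_card_le_finrank
  rw [Fintype.card_fin, hm] at this
  omega

theorem exists_orthonormalBasis_inner_apply_eq_zero (hn : finrank 𝕜 E = n) {m : ℕ}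
    (hm : finrank 𝕜 F = m) :
    ∃ (e : OrthonormalBasis (Fin n) 𝕜 E) (f : OrthonormalBasis (Fin m) 𝕜 F),
      ∀ (i : Fin m) (j : Fin n), (i : ℕ) ≠ j → ⟪f i, A (e j)⟫_𝕜 = 0 := by
  set e := A.isSymmetric_adjoint_comp_self.eigenvectorBasis hn
  set w : Fin m → F := fun i => if h : (i : ℕ) < n then A (e ⟨i, h⟩) else 0
  have hw : Pairwise fun i i' => ⟪w i, w i'⟫_𝕜 = 0 := by
    intro i i' hii'
    simp only [w]
    split_ifs <;> simp [e, inner_apply_eigenvectorBasis_adjoint_comp_self A hn,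
      Fin.val_ne_of_ne hii']
  set f := gramSchmidtOrthonormalBasis (hm.trans (Fintype.card_fin m).symm) w
  refine ⟨e, f, fun i j hij => ?_⟩
  by_cases hAj : A (e j) = 0
  · rw [hAj, inner_zero_right]
  have hjm : (j : ℕ) < m :=
    not_le.mp fun h => hAj (apply_eigenvectorBasis_adjoint_comp_self_eq_zero A hn hm h)
  have hwj : w ⟨j, hjm⟩ = A (e j) := dif_pos j.isLt
  have hf : f ⟨j, hjm⟩ = (‖A (e j)‖⁻¹ : 𝕜) • A (e j) := by
    rw [← hwj]
    exact gramSchmidtOrthonormalBasis_apply_of_orthogonal _ hw (hwj ▸ hAj)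
  have hAej : A (e j) = (‖A (e j)‖ : 𝕜) • f ⟨j, hjm⟩ := by
    rw [hf, smul_smul, mul_inv_cancel₀ (by simpa using hAj), one_smul]
  rw [hAej, inner_smul_right, orthonormal_iff_ite.mp f.orthonormal,
    if_neg (by simpa [Fin.ext_iff] using hij), mul_zero]

end SVD

section MatrixSVD
open Matrix

def IsRectDiag {m n : ℕ} {α : Type*} [Zero α] (S : Matrix (Fin m) (Fin n) α) : Prop :=
  ∀ (i : Fin m) (j : Fin n), (i : ℕ) ≠ j → S i j = 0

structure IsSVD {R : Type*} [CommRing R] [StarRing R] {m n : ℕ} (A : Matrix (Fin m) (Fin n) R)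
    (U : Matrix (Fin m) (Fin m) R) (S : Matrix (Fin m) (Fin n) R)
    (V : Matrix (Fin n) (Fin n) R) : Prop where
  left_mem_unitaryGroup : U ∈ unitaryGroup (Fin m) R
  right_mem_unitaryGroup : V ∈ unitaryGroup (Fin n) R
  isRectDiag : IsRectDiag S
  eq_mul : A = U * S * Vᴴ

theorem exists_isSVD {𝕜 : Type*} [RCLike 𝕜] {m n : ℕ} (A : Matrix (Fin m) (Fin n) 𝕜) :
    ∃ U S V, IsSVD A U S V := by
  obtain ⟨e, f, hef⟩ := exists_orthonormalBasis_inner_apply_eq_zero (toEuclideanLin A)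
    (finrank_euclideanSpace_fin) (finrank_euclideanSpace_fin)
  set U := (EuclideanSpace.basisFun (Fin m) 𝕜).toBasis.toMatrix f
  set V := (EuclideanSpace.basisFun (Fin n) 𝕜).toBasis.toMatrix e
  have hU := (EuclideanSpace.basisFun (Fin m) 𝕜).toMatrix_orthonormalBasis_mem_unitary f
  have hV := (EuclideanSpace.basisFun (Fin n) 𝕜).toMatrix_orthonormalBasis_mem_unitary e
  refine ⟨U, Uᴴ * A * V, V, hU, hV, fun i j hij => ?_, ?_⟩
  · rw [← hef i j hij, EuclideanSpace.inner_eq_star_dotProduct]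
    simp only [U, V, Module.Basis.toMatrix_apply, OrthonormalBasis.coe_toBasis_repr_apply,
      EuclideanSpace.basisFun_repr, mul_apply, conjTranspose_apply, dotProduct, Pi.star_apply,
      toLpLin_apply, mulVec, Finset.sum_mul]
    rw [Finset.sum_comm]
    exact Finset.sum_congr rfl fun _ _ => Finset.sum_congr rfl fun _ _ => by ring
  · have hUU : U * Uᴴ = 1 := Unitary.mul_star_self_of_mem hU
    have hVV : V * Vᴴ = 1 := Unitary.mul_star_self_of_mem hV
    rw [← Matrix.mul_assoc, ← Matrix.mul_assoc, hUU, Matrix.one_mul, Matrix.mul_assoc, hVV,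
      Matrix.mul_one]

end MatrixSVD

section SymmetricSVD
open Matrix
open scoped ComplexConjugate

theorem map_mem_unitaryGroup {R R' : Type*} [CommRing R] [StarRing R] [CommRing R'] [StarRing R']
    {n : ℕ} {U : Matrix (Fin n) (Fin n) R} (hU : U ∈ unitaryGroup (Fin n) R) (f : R →+* R')
    (hf : Function.Semiconj f star star) : U.map f ∈ unitaryGroup (Fin n) R' := by
  rw [mem_unitaryGroup_iff, star_eq_conjTranspose, ← conjTranspose_map f hf, ← f.mapMatrix_apply,
    ← f.mapMatrix_apply, ← map_mul, ← star_eq_conjTranspose, Unitary.mul_star_self_of_mem hU,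
    map_one]

theorem IsSVD.map {R R' : Type*} [CommRing R] [StarRing R] [CommRing R'] [StarRing R']
    {m n : ℕ} {A : Matrix (Fin m) (Fin n) R} {U : Matrix (Fin m) (Fin m) R}
    {S : Matrix (Fin m) (Fin n) R} {V : Matrix (Fin n) (Fin n) R} (h : IsSVD A U S V)
    (f : R →+* R') (hf : Function.Semiconj f star star) :
    IsSVD (A.map f) (U.map f) (S.map f) (V.map f) where
  left_mem_unitaryGroup := map_mem_unitaryGroup h.left_mem_unitaryGroup f hf
  right_mem_unitaryGroup := map_mem_unitaryGroup h.right_mem_unitaryGroup f hf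
  isRectDiag i j hij := by rw [map_apply, h.isRectDiag i j hij, map_zero]
  eq_mul := by rw [h.eq_mul, Matrix.map_mul, Matrix.map_mul, conjTranspose_map f hf]

theorem map_conj_map_ofReal {m n : ℕ} (M : Matrix (Fin m) (Fin n) ℝ) :
    (M.map Complex.ofRealHom).map conj = M.map Complex.ofRealHom := by
  ext i j
  simp

theorem exists_isSVD_of_map_conj_eq {m n : ℕ} {A : Matrix (Fin m) (Fin n) ℂ}
    (hA : A.map conj = A) :
    ∃ U S V, IsSVD A U S V ∧ U.map conj = U ∧ S.map conj = S ∧ V.map conj = V := by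
  obtain ⟨U, S, V, h⟩ := exists_isSVD (A.map Complex.re)
  have hre : (A.map Complex.re).map Complex.ofRealHom = A := by
    ext i j
    exact Complex.conj_eq_iff_re.mp (congrFun₂ hA i j)
  refine ⟨_, _, _, hre ▸ h.map Complex.ofRealHom fun x => ?_, map_conj_map_ofReal U,
    map_conj_map_ofReal S, map_conj_map_ofReal V⟩
  simp

theorem exists_equivariant_choice {ι β : Type*} [InvolutiveNeg ι] {c : β → β}
    (hc : Function.Involutive c) (P : ι → β → Prop) (hP : ∀ k x, P k x → P (-k) (c x))
    (hex : ∀ k, ∃ x, P k x ∧ (-k = k → c x = x)) :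
    ∃ x : ι → β, ∀ k, P k (x k) ∧ x (-k) = c (x k) := by
  -- any linear order singles out one representative `k ≤ -k` of each orbit `{k, -k}`
  let _ : LinearOrder ι := WellOrderingRel.isWellOrder.linearOrder
  choose y hyP hyfix using hex
  refine ⟨fun k => if k ≤ -k then y k else c (y (-k)), fun k => ⟨?_, ?_⟩⟩ <;> dsimp only
  · split_ifs
    · exact hyP k
    · simpa using hP _ _ (hyP (-k))
  · rcases lt_trichotomy k (-k) with hk | hk | hk
    · simp [hk.le, not_le.mpr hk]
    · have hk' : -k = k := hk.symm
      simp only [hk', le_refl, if_true, hyfix k hk']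
    · simp [hk.le, not_le.mpr hk, hc (y (-k))]

theorem exists_isSVD_conj_symmetric {ι : Type*} [InvolutiveNeg ι] {m n : ℕ}
    (M : ι → Matrix (Fin m) (Fin n) ℂ) (hM : ∀ k, M (-k) = (M k).map conj) :
    ∃ (U : ι → Matrix (Fin m) (Fin m) ℂ) (S : ι → Matrix (Fin m) (Fin n) ℂ)
      (V : ι → Matrix (Fin n) (Fin n) ℂ), ∀ k, IsSVD (M k) (U k) (S k) (V k) ∧
        U (-k) = (U k).map conj ∧ S (-k) = (S k).map conj ∧ V (-k) = (V k).map conj := by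
  have hconj : Function.Semiconj (conj : ℂ →+* ℂ) star star := fun _ => rfl
  have hex : ∀ k, ∃ x : Matrix (Fin m) (Fin m) ℂ × Matrix (Fin m) (Fin n) ℂ ×
      Matrix (Fin n) (Fin n) ℂ, IsSVD (M k) x.1 x.2.1 x.2.2 ∧
        (-k = k → (x.1.map conj, x.2.1.map conj, x.2.2.map conj) = x) := by
    intro k
    by_cases hk : -k = k
    · obtain ⟨U, S, V, h, hU, hS, hV⟩ := exists_isSVD_of_map_conj_eq (A := M k) (by rw [← hM, hk])
      exact ⟨(U, S, V), h, fun _ => by rw [hU, hS, hV]⟩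
    · obtain ⟨U, S, V, h⟩ := exists_isSVD (M k)
      exact ⟨(U, S, V), h, fun h' => absurd h' hk⟩
  obtain ⟨x, hx⟩ := exists_equivariant_choice
    (c := fun x => (x.1.map conj, x.2.1.map conj, x.2.2.map conj)) (fun x => by ext <;> simp)
    (fun k x => IsSVD (M k) x.1 x.2.1 x.2.2) (fun k x h => hM k ▸ h.map conj hconj) hex
  exact ⟨fun k => (x k).1, fun k => (x k).2.1, fun k => (x k).2.2, fun k =>
    ⟨(hx k).1, by simp only [(hx k).2, and_self]⟩⟩

end SymmetricSVD

section DFT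
open ZMod
open scoped ComplexConjugate

variable {N : ℕ} [NeZero N]

theorem dft_conv (Φ Ψ : ZMod N → ℂ) (k : ZMod N) :
    𝓕 (fun t => ∑ m, Φ m * Ψ (t - m)) k = 𝓕 Φ k * 𝓕 Ψ k := by
  rw [dft_apply, dft_apply Φ, Finset.sum_mul]
  simp only [smul_eq_mul, Finset.mul_sum]
  rw [Finset.sum_comm]
  refine Finset.sum_congr rfl fun m _ => ?_
  rw [dft_apply, Finset.mul_sum]
  refine Fintype.sum_equiv (Equiv.subRight m) _ _ fun t => ?_
  rw [Equiv.subRight_apply, smul_eq_mul, show -(t * k) = -(m * k) + -((t - m) * k) by ring,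
    AddChar.map_add_eq_mul]
  ring

theorem dft_conj (Φ : ZMod N → ℂ) (k : ZMod N) :
    𝓕 (fun j => conj (Φ j)) k = conj (𝓕 Φ (-k)) := by
  simp only [dft_apply, smul_eq_mul, map_sum, map_mul, ← AddChar.map_neg_eq_conj]
  congr! 3
  ring

end DFT

section Tube
open ZMod
open scoped ComplexConjugate

variable {T : ℕ}

theorem dftR_sum {ι : Type*} (s : Finset ι) (f : ι → Fin T → ℝ) (k : Fin T) :
    dftR (∑ i ∈ s, f i) k = ∑ i ∈ s, dftR (f i) k := by
  simp only [dftR, Finset.sum_apply, Complex.ofReal_sum, Finset.sum_mul]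
  exact Finset.sum_comm

variable [NeZero T]

open Fin.CommRing in
theorem finEquiv_apply_eq_natCast (j : Fin T) : ZMod.finEquiv T j = ((j : ℕ) : ZMod T) := by
  rw [← map_natCast (ZMod.finEquiv T), Fin.cast_val_eq_self]

noncomputable def toZMod (x : Fin T → ℝ) : ZMod T → ℂ := fun j => x ((ZMod.finEquiv T).symm j)

theorem dftR_eq_dft (x : Fin T → ℝ) (k : Fin T) :
    dftR x k = 𝓕 (toZMod x) (ZMod.finEquiv T k) := by
  rw [dftR, dft_apply]
  refine Fintype.sum_equiv (ZMod.finEquiv T).toEquiv _ _ fun j => ?_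
  have hjk : -(ZMod.finEquiv T j * ZMod.finEquiv T k) =
      (Int.cast (-((k : ℕ) * (j : ℕ) : ℤ)) : ZMod T) := by
    push_cast
    rw [finEquiv_apply_eq_natCast, finEquiv_apply_eq_natCast]
    ring
  simp only [RingEquiv.toEquiv_eq_coe, EquivLike.coe_coe, toZMod, RingEquiv.symm_apply_apply]
  rw [hjk, stdAddChar_coe, smul_eq_mul, mul_comm]
  congr 2
  push_cast
  ring

theorem toZMod_injective : Function.Injective (toZMod (T := T)) := by
  intro x y h
  funext t
  simpa [toZMod] using congrFun h (ZMod.finEquiv T t)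

theorem conj_toZMod (x : Fin T → ℝ) (j : ZMod T) : conj (toZMod x j) = toZMod x j :=
  Complex.conj_ofReal _

theorem dftR_injective {x y : Fin T → ℝ} (h : ∀ k, dftR x k = dftR y k) : x = y := by
  refine toZMod_injective (dft.injective (funext fun k => ?_))
  obtain ⟨k, rfl⟩ := (ZMod.finEquiv T).surjective k
  simpa only [dftR_eq_dft] using h k

theorem dftR_cconv (x y : Fin T → ℝ) (k : Fin T) :
    dftR (cconv x y) k = dftR x k * dftR y k := by
  rw [dftR_eq_dft, dftR_eq_dft, dftR_eq_dft, ← dft_conv]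
  refine congrArg (fun Φ => 𝓕 Φ _) (funext fun t => ?_)
  simp only [toZMod, cconv, Complex.ofReal_sum, Complex.ofReal_mul]
  refine Fintype.sum_equiv (ZMod.finEquiv T).toEquiv _ _ fun m => ?_
  simp [map_sub]

theorem dftR_neg (x : Fin T → ℝ) (k : Fin T) : dftR x (-k) = conj (dftR x k) := by
  have h := dft_conj (toZMod x) (-ZMod.finEquiv T k)
  simp only [conj_toZMod, neg_neg] at h
  rw [dftR_eq_dft, dftR_eq_dft, map_neg, h]

theorem dftR_comp_neg (x : Fin T → ℝ) (k : Fin T) :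
    dftR (fun t => x (-t)) k = conj (dftR x k) := by
  have h : toZMod (fun t => x (-t)) = fun j => toZMod x (-j) := by
    funext j
    simp [toZMod, map_neg]
  rw [← dftR_neg, dftR_eq_dft, dftR_eq_dft, h, dft_comp_neg, map_neg]

theorem exists_dftR_eq (g : Fin T → ℂ) (hg : ∀ k, g (-k) = conj (g k)) :
    ∃ x : Fin T → ℝ, ∀ k, dftR x k = g k := by
  set e := ZMod.finEquiv T
  set Φ := 𝓕⁻ (fun j => g (e.symm j))
  have hΦ : (fun j => conj (Φ j)) = Φ := by
    refine dft.injective (funext fun k => ?_)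
    rw [dft_conj, LinearEquiv.apply_symm_apply, map_neg, hg, Complex.conj_conj]
  have hx : toZMod (fun t => (Φ (e t)).re) = Φ := by
    funext j
    simpa [toZMod, e, Complex.conj_eq_iff_re] using congrFun hΦ j
  refine ⟨fun t => (Φ (e t)).re, fun k => ?_⟩
  rw [dftR_eq_dft, hx, LinearEquiv.apply_symm_apply, RingEquiv.symm_apply_apply]

end Tube

section Slice
open Matrix
open scoped ComplexConjugate

noncomputable def dftSlice {a b T : ℕ} (X : Fin a → Fin b → Fin T → ℝ) (k : Fin T) :
    Matrix (Fin a) (Fin b) ℂ :=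
  Matrix.of fun i j => dftR (X i j) k

variable {T : ℕ} [NeZero T] {a b c : ℕ}

theorem dftSlice_tprod (X : Fin a → Fin b → Fin T → ℝ) (Y : Fin b → Fin c → Fin T → ℝ)
    (k : Fin T) : dftSlice (tprod X Y) k = dftSlice X k * dftSlice Y k := by
  ext i j
  simp only [dftSlice, tprod, of_apply, mul_apply, dftR_sum, dftR_cconv]

theorem dftSlice_ttrans (X : Fin a → Fin b → Fin T → ℝ) (k : Fin T) :
    dftSlice (ttrans X) k = (dftSlice X k)ᴴ := by
  ext j i
  exact dftR_comp_neg (X i j) k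

theorem dftSlice_tId (k : Fin T) : dftSlice (tId (n := a)) k = 1 := by
  ext i j
  rw [dftSlice, of_apply, one_apply, dftR, Finset.sum_eq_single 0]
  · by_cases h : i = j <;> simp [tId, h]
  · intro t _ ht
    simp [tId, Fin.val_ne_zero_iff.mpr ht]
  · simp

theorem dftSlice_neg (X : Fin a → Fin b → Fin T → ℝ) (k : Fin T) :
    dftSlice X (-k) = (dftSlice X k).map conj := by
  ext i j
  exact dftR_neg (X i j) k

theorem dftSlice_injective {X Y : Fin a → Fin b → Fin T → ℝ}
    (h : ∀ k, dftSlice X k = dftSlice Y k) : X = Y := by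
  funext i j
  exact dftR_injective fun k => congrFun₂ (h k) i j

theorem exists_dftSlice_eq (M : Fin T → Matrix (Fin a) (Fin b) ℂ)
    (hM : ∀ k, M (-k) = (M k).map conj) : ∃ X, dftSlice X = M := by
  choose X hX using fun i j => exists_dftR_eq (fun k => M k i j) fun k => congrFun₂ (hM k) i j
  exact ⟨X, funext fun k => Matrix.ext fun i j => hX i j k⟩

theorem tOrthogonal_of_dftSlice_mem_unitaryGroup {Q : Fin a → Fin a → Fin T → ℝ}
    (hQ : ∀ k, dftSlice Q k ∈ unitaryGroup (Fin a) ℂ) : tOrthogonal Q := by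
  constructor <;> refine dftSlice_injective fun k => ?_ <;>
    rw [dftSlice_tprod, dftSlice_ttrans, dftSlice_tId]
  · exact Unitary.star_mul_self_of_mem (hQ k)
  · exact Unitary.mul_star_self_of_mem (hQ k)

end Slice

/-- every real third-order tensor admits a T-SVD `X = U * S * Vᵀ` with
t-orthogonal `U, V` and f-diagonal `S`. -/
theorem tSVD_exists {I1 I2 I3 : ℕ} (X : Fin I1 → Fin I2 → Fin I3 → ℝ) :
    ∃ (U : Fin I1 → Fin I1 → Fin I3 → ℝ) (S : Fin I1 → Fin I2 → Fin I3 → ℝ)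
      (V : Fin I2 → Fin I2 → Fin I3 → ℝ),
      tOrthogonal U ∧ tOrthogonal V ∧ fDiagonal S ∧
        X = tprod (tprod U S) (ttrans V) := by
  rcases Nat.eq_zero_or_pos I3 with rfl | hI3
  · exact ⟨tId, X, tId, ⟨Subsingleton.elim _ _, Subsingleton.elim _ _⟩,
      ⟨Subsingleton.elim _ _, Subsingleton.elim _ _⟩, fun t => t.elim0, Subsingleton.elim _ _⟩
  have : NeZero I3 := ⟨hI3.ne'⟩
  obtain ⟨Uhat, Shat, Vhat, h⟩ := exists_isSVD_conj_symmetric (dftSlice X) (dftSlice_neg X)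
  obtain ⟨U, rfl⟩ := exists_dftSlice_eq Uhat fun k => (h k).2.1
  obtain ⟨S, rfl⟩ := exists_dftSlice_eq Shat fun k => (h k).2.2.1
  obtain ⟨V, rfl⟩ := exists_dftSlice_eq Vhat fun k => (h k).2.2.2
  refine ⟨U, S, V,
    tOrthogonal_of_dftSlice_mem_unitaryGroup fun k => (h k).1.left_mem_unitaryGroup,
    tOrthogonal_of_dftSlice_mem_unitaryGroup fun k => (h k).1.right_mem_unitaryGroup,
    fun t => (h t).1.isRectDiag, dftSlice_injective fun k => ?_⟩
  rw [dftSlice_tprod, dftSlice_tprod, dftSlice_ttrans]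
  exact (h k).1.eq_mul

end TTT
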